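/- Let G=(V,E) be a weighted undirected connected simple locally finite graph with edge weights w_{xy}>0 and let x,y be neighboring vertices. Then κ(x,y) ≥ −2(1 − w_{xy}/d_x − w_{xy}/d_y)_+. -/

import Mathlib

/-! With `a = m_x(y)` and `b = m_y(x)`, a transport plan from `m_x` to `m_y` moves mass over
distance `1`, except mass sent from `u ≠ y` to `v ≠ x`, which travels at most `3` (`u ∼ x ∼ y ∼ v`).
So `W₁(m_x, m_y) ≤ 1 + 2 t` whenever some coupling puts only mass `t` on such pairs, and
`t = (1 - a - b)₊` is reached by lifting the coupling of the events `u = y` and `v = x` that puts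
the least mass on neither of them. -/

open SimpleGraph Finset

variable {V : Type*}

/-- A system of edge weights on `G`: symmetric, positive on edges and zero elsewhere. -/
def IsWeight (G : SimpleGraph V) (w : V → V → ℝ) : Prop :=
  (∀ u v, w u v = w v u) ∧ (∀ u v, G.Adj u v → 0 < w u v) ∧ (∀ u v, ¬G.Adj u v → w u v = 0)

/-- The weighted degree `d_x = ∑_{y∼x} w_{xy}`. -/
noncomputable def wdeg (G : SimpleGraph V) [G.LocallyFinite] (w : V → V → ℝ) (x : V) : ℝ :=
  ∑ y ∈ G.neighborFinset x, w x y

/-- The probability measure attached to a vertex `x`: `m_x(z) = w_{xz}/d_x` for `z ∼ x`. -/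
noncomputable def wMeasure (G : SimpleGraph V) [G.LocallyFinite] [DecidableRel G.Adj]
    (w : V → V → ℝ) (x z : V) : ℝ :=
  if G.Adj x z then w x z / wdeg G w x else 0

/-- A coupling (transfer plan) between the measures `m_x` and `m_y`. -/
def IsWCoupling (G : SimpleGraph V) [G.LocallyFinite] [DecidableRel G.Adj]
    (w : V → V → ℝ) (x y : V) (ξ : V → V → ℝ) : Prop :=
  (∀ u v, 0 ≤ ξ u v) ∧
  (∀ u v, ξ u v ≠ 0 → G.Adj x u ∧ G.Adj y v) ∧
  (∀ u, ∑ v ∈ G.neighborFinset y, ξ u v = wMeasure G w x u) ∧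
  (∀ v, ∑ u ∈ G.neighborFinset x, ξ u v = wMeasure G w y v)

/-- The transportation distance `W₁(m_x, m_y)`. -/
noncomputable def wW1 (G : SimpleGraph V) [G.LocallyFinite] [DecidableRel G.Adj]
    (w : V → V → ℝ) (x y : V) : ℝ :=
  sInf { c : ℝ | ∃ ξ : V → V → ℝ, IsWCoupling G w x y ξ ∧
    c = ∑ u ∈ G.neighborFinset x, ∑ v ∈ G.neighborFinset y, (G.dist u v : ℝ) * ξ u v }

/-- Ollivier's Ricci curvature `κ(x,y) = 1 - W₁(m_x,m_y)/d(x,y)` on a weighted graph. -/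
noncomputable def wRicci (G : SimpleGraph V) [G.LocallyFinite] [DecidableRel G.Adj]
    (w : V → V → ℝ) (x y : V) : ℝ :=
  1 - wW1 G w x y / (G.dist x y : ℝ)

/-- Positive part of a real number: `a₊ = max a 0`. -/
noncomputable def posPart' (a : ℝ) : ℝ := max a 0

section PointedPlan

variable {α : Type*} [DecidableEq α]

/-- The lift of the coupling of the indicators of `u = y` and `v = x` with masses `p`, `A (1 - b)`,
`B (1 - a)`, `C (1 - a) (1 - b)`, where `a = μ y`, `b = ν x`. -/
def pointedPlan (y x : α) (μ ν : α → ℝ) (p A B C : ℝ) (u v : α) : ℝ :=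
  if u = y then if v = x then p else A * ν v
  else if v = x then B * μ u else C * (μ u * ν v)

variable {y x : α} {μ ν : α → ℝ} {p A B C : ℝ}

lemma pointedPlan_comm (u v : α) :
    pointedPlan y x μ ν p A B C u v = pointedPlan x y ν μ p B A C v u := by
  unfold pointedPlan
  split_ifs <;> ring

lemma pointedPlan_nonneg (hμ : ∀ u, 0 ≤ μ u) (hν : ∀ v, 0 ≤ ν v)
    (hp : 0 ≤ p) (hA : 0 ≤ A) (hB : 0 ≤ B) (hC : 0 ≤ C) (u v : α) :
    0 ≤ pointedPlan y x μ ν p A B C u v := by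
  unfold pointedPlan
  split_ifs
  exacts [hp, mul_nonneg hA (hν v), mul_nonneg hB (hμ u),
    mul_nonneg hC (mul_nonneg (hμ u) (hν v))]

lemma sum_pointedPlan_erase {t : Finset α} (hx : x ∈ t) (u : α) :
    ∑ v ∈ t.erase x, pointedPlan y x μ ν p A B C u v
      = (if u = y then A else C * μ u) * (∑ v ∈ t, ν v - ν x) := by
  rw [← sum_erase_eq_sub hx, mul_sum]
  refine sum_congr rfl fun v hv => ?_
  simp only [pointedPlan, if_neg (ne_of_mem_erase hv)]
  split_ifs <;> ring

lemma sum_pointedPlan_of_eq {t : Finset α} (hx : x ∈ t) :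
    ∑ v ∈ t, pointedPlan y x μ ν p A B C y v = p + A * (∑ v ∈ t, ν v - ν x) := by
  rw [← add_sum_erase t _ hx, sum_pointedPlan_erase hx]
  simp [pointedPlan]

lemma sum_pointedPlan_of_ne {t : Finset α} (hx : x ∈ t) {u : α} (hu : u ≠ y) :
    ∑ v ∈ t, pointedPlan y x μ ν p A B C u v = μ u * (B + C * (∑ v ∈ t, ν v - ν x)) := by
  rw [← add_sum_erase t _ hx, sum_pointedPlan_erase hx]
  simp only [pointedPlan, if_neg hu, if_true]
  ring

lemma sum_sum_pointedPlan_erase_erase {s t : Finset α} (hy : y ∈ s) (hx : x ∈ t) :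
    ∑ u ∈ s.erase y, ∑ v ∈ t.erase x, pointedPlan y x μ ν p A B C u v
      = C * (∑ u ∈ s, μ u - μ y) * (∑ v ∈ t, ν v - ν x) := by
  rw [← sum_erase_eq_sub hy, mul_sum, sum_mul]
  refine sum_congr rfl fun u hu => ?_
  rw [sum_pointedPlan_erase hx, if_neg (ne_of_mem_erase hu)]

lemma exists_pointedPlan_coeffs {a b : ℝ} (ha : 0 ≤ a) (hb : 0 ≤ b) :
    ∃ p A B C : ℝ, 0 ≤ p ∧ 0 ≤ A ∧ 0 ≤ B ∧ 0 ≤ C ∧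
      p + A * (1 - b) = a ∧ p + B * (1 - a) = b ∧
      B + C * (1 - b) = 1 ∧ A + C * (1 - a) = 1 ∧
      C * (1 - a) * (1 - b) ≤ max (1 - a - b) 0 := by
  rcases le_or_gt 1 (a + b) with hab | hab
  · exact ⟨a + b - 1, 1, 1, 0, by linarith, zero_le_one, zero_le_one, le_rfl,
      by ring, by ring, by ring, by ring, by simp⟩
  · have ha1 : 0 < 1 - a := by linarith
    have hb1 : 0 < 1 - b := by linarith
    refine ⟨0, a / (1 - b), b / (1 - a), (1 - a - b) / ((1 - a) * (1 - b)), le_rfl,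
      by positivity, by positivity, div_nonneg (by linarith) (by positivity), ?_, ?_, ?_, ?_, ?_⟩
    · field_simp; ring
    · field_simp; ring
    · field_simp; ring
    · field_simp; ring
    · field_simp; exact le_max_left _ _

theorem exists_coupling_sum_erase_erase_le {s t : Finset α} (hμ : ∀ u, 0 ≤ μ u)
    (hν : ∀ v, 0 ≤ ν v) (hμs : ∑ u ∈ s, μ u = 1) (hνt : ∑ v ∈ t, ν v = 1)
    (hy : y ∈ s) (hx : x ∈ t) :
    ∃ ξ : α → α → ℝ, (∀ u v, 0 ≤ ξ u v) ∧ (∀ u ∈ s, ∑ v ∈ t, ξ u v = μ u) ∧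
      (∀ v ∈ t, ∑ u ∈ s, ξ u v = ν v) ∧
      ∑ u ∈ s.erase y, ∑ v ∈ t.erase x, ξ u v ≤ max (1 - μ y - ν x) 0 := by
  obtain ⟨p, A, B, C, hp, hA, hB, hC, hrow_y, hcol_x, hrow, hcol, hoff⟩ :=
    exists_pointedPlan_coeffs (hμ y) (hν x)
  refine ⟨pointedPlan y x μ ν p A B C, pointedPlan_nonneg hμ hν hp hA hB hC,
    fun u _ => ?_, fun v _ => ?_, ?_⟩
  · by_cases hu : u = y
    · rw [hu, sum_pointedPlan_of_eq hx, hνt, hrow_y]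
    · rw [sum_pointedPlan_of_ne hx hu, hνt, hrow, mul_one]
  · rw [sum_congr rfl fun u _ => pointedPlan_comm u v]
    by_cases hv : v = x
    · rw [hv, sum_pointedPlan_of_eq hy, hμs, hcol_x]
    · rw [sum_pointedPlan_of_ne hy hv, hμs, hcol, mul_one]
  · rwa [sum_sum_pointedPlan_erase_erase hy hx, hμs, hνt]

end PointedPlan

section Graph

variable {G : SimpleGraph V} {w : V → V → ℝ} {x y : V}

lemma dist_le_three_of_adj {u v : V} (hux : G.Adj u x) (hxy : G.Adj x y) (hyv : G.Adj y v) :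
    G.dist u v ≤ 3 :=
  dist_le (.cons hux (.cons hxy (.cons hyv .nil)))

variable [G.LocallyFinite]

lemma IsWeight.wdeg_pos (hw : IsWeight G w) (hxy : G.Adj x y) : 0 < wdeg G w x :=
  sum_pos' (fun z hz => (hw.2.1 x z ((mem_neighborFinset G x z).1 hz)).le)
    ⟨y, (mem_neighborFinset G x y).2 hxy, hw.2.1 x y hxy⟩

variable [DecidableRel G.Adj]

lemma IsWeight.wMeasure_nonneg (hw : IsWeight G w) (x z : V) : 0 ≤ wMeasure G w x z := by
  unfold wMeasure
  split_ifs with hxz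
  · exact div_nonneg (hw.2.1 x z hxz).le (hw.wdeg_pos hxz).le
  · exact le_rfl

lemma IsWeight.sum_wMeasure (hw : IsWeight G w) (hxy : G.Adj x y) :
    ∑ z ∈ G.neighborFinset x, wMeasure G w x z = 1 := by
  unfold wMeasure
  rw [sum_congr rfl fun z hz => if_pos ((mem_neighborFinset G x z).1 hz), ← sum_div]
  exact div_self (hw.wdeg_pos hxy).ne'

lemma isWCoupling_of_marginals {ξ : V → V → ℝ} (hnn : ∀ u v, 0 ≤ ξ u v)
    (hrow : ∀ u ∈ G.neighborFinset x, ∑ v ∈ G.neighborFinset y, ξ u v = wMeasure G w x u)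
    (hcol : ∀ v ∈ G.neighborFinset y, ∑ u ∈ G.neighborFinset x, ξ u v = wMeasure G w y v) :
    IsWCoupling G w x y fun u v => if G.Adj x u ∧ G.Adj y v then ξ u v else 0 := by
  refine ⟨fun u v => ?_, fun u v h => ?_, fun u => ?_, fun v => ?_⟩
  · dsimp only
    split_ifs
    exacts [hnn u v, le_rfl]
  · by_contra hc
    exact h (if_neg hc)
  · by_cases hu : G.Adj x u
    · rw [← hrow u ((mem_neighborFinset G x u).2 hu)]
      exact sum_congr rfl fun v hv => if_pos ⟨hu, (mem_neighborFinset G y v).1 hv⟩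
    · rw [wMeasure, if_neg hu]
      exact sum_eq_zero fun v _ => if_neg fun h => hu h.1
  · by_cases hv : G.Adj y v
    · rw [← hcol v ((mem_neighborFinset G y v).2 hv)]
      exact sum_congr rfl fun u hu => if_pos ⟨(mem_neighborFinset G x u).1 hu, hv⟩
    · rw [wMeasure, if_neg hv]
      exact sum_eq_zero fun u _ => if_neg fun h => hv h.2

lemma cost_le_of_isWCoupling [DecidableEq V] (hw : IsWeight G w) (hxy : G.Adj x y)
    {ξ : V → V → ℝ} (hξ : IsWCoupling G w x y ξ) :
    ∑ u ∈ G.neighborFinset x, ∑ v ∈ G.neighborFinset y, (G.dist u v : ℝ) * ξ u v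
      ≤ 1 + 2 * ∑ u ∈ (G.neighborFinset x).erase y, ∑ v ∈ (G.neighborFinset y).erase x, ξ u v := by
  have hmass : ∑ u ∈ G.neighborFinset x, ∑ v ∈ G.neighborFinset y, ξ u v = 1 := by
    rw [sum_congr rfl fun u _ => hξ.2.2.1 u]
    exact hw.sum_wMeasure hxy
  have hoff : ∑ u ∈ (G.neighborFinset x).erase y, ∑ v ∈ (G.neighborFinset y).erase x, ξ u v
      = ∑ u ∈ G.neighborFinset x, ∑ v ∈ G.neighborFinset y,
          if u ≠ y ∧ v ≠ x then ξ u v else 0 := by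
    simp only [← filter_ne', sum_filter, ite_sum_zero, ite_and]
  have hpoint : ∀ u ∈ G.neighborFinset x, ∀ v ∈ G.neighborFinset y,
      (G.dist u v : ℝ) * ξ u v ≤ ξ u v + 2 * if u ≠ y ∧ v ≠ x then ξ u v else 0 := by
    intro u hu v hv
    rw [mem_neighborFinset] at hu hv
    have hξuv := hξ.1 u v
    split_ifs with h
    · have : (G.dist u v : ℝ) ≤ 3 := by exact_mod_cast dist_le_three_of_adj hu.symm hxy hv
      nlinarith
    · have : G.dist u v ≤ 1 := by
        rcases not_and_or.1 h with huy | hvx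
        · rw [not_not.1 huy]; exact (dist_eq_one_iff_adj.2 hv).le
        · rw [not_not.1 hvx]; exact (dist_eq_one_iff_adj.2 hu.symm).le
      have : (G.dist u v : ℝ) ≤ 1 := by exact_mod_cast this
      nlinarith
  calc ∑ u ∈ G.neighborFinset x, ∑ v ∈ G.neighborFinset y, (G.dist u v : ℝ) * ξ u v
      ≤ ∑ u ∈ G.neighborFinset x, ∑ v ∈ G.neighborFinset y,
          (ξ u v + 2 * if u ≠ y ∧ v ≠ x then ξ u v else 0) :=
        sum_le_sum fun u hu => sum_le_sum fun v hv => hpoint u hu v hv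
    _ = _ := by rw [hoff, mul_sum]; simp only [sum_add_distrib, mul_sum, hmass]

lemma wW1_le_cost {ξ : V → V → ℝ} (hξ : IsWCoupling G w x y ξ) :
    wW1 G w x y
      ≤ ∑ u ∈ G.neighborFinset x, ∑ v ∈ G.neighborFinset y, (G.dist u v : ℝ) * ξ u v := by
  refine csInf_le ⟨0, ?_⟩ ⟨ξ, hξ, rfl⟩
  rintro _ ⟨ζ, hζ, rfl⟩
  exact sum_nonneg fun u _ => sum_nonneg fun v _ => mul_nonneg (Nat.cast_nonneg _) (hζ.1 u v)

theorem wW1_le (hw : IsWeight G w) (hxy : G.Adj x y) :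
    wW1 G w x y ≤ 1 + 2 * max (1 - wMeasure G w x y - wMeasure G w y x) 0 := by
  classical
  obtain ⟨ξ, hnn, hrow, hcol, hoff⟩ := exists_coupling_sum_erase_erase_le
    (hw.wMeasure_nonneg x) (hw.wMeasure_nonneg y) (hw.sum_wMeasure hxy)
    (hw.sum_wMeasure hxy.symm) ((mem_neighborFinset G x y).2 hxy)
    ((mem_neighborFinset G y x).2 hxy.symm)
  have hξ := isWCoupling_of_marginals (w := w) hnn hrow hcol
  refine (wW1_le_cost hξ).trans ((cost_le_of_isWCoupling hw hxy hξ).trans ?_)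
  gcongr
  refine le_of_eq_of_le (sum_congr rfl fun u hu => sum_congr rfl fun v hv => ?_) hoff
  exact if_pos ⟨(mem_neighborFinset G x u).1 (mem_of_mem_erase hu),
    (mem_neighborFinset G y v).1 (mem_of_mem_erase hv)⟩

end Graph

theorem wricci_lower_bound (G : SimpleGraph V) [G.LocallyFinite] [DecidableRel G.Adj]
    (w : V → V → ℝ) (hw : IsWeight G w)
    (x y : V) (hxy : G.Adj x y) :
    wRicci G w x y ≥
      -2 * posPart' (1 - w x y / wdeg G w x - w x y / wdeg G w y) := by
  have hmx : wMeasure G w x y = w x y / wdeg G w x := if_pos hxy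
  have hmy : wMeasure G w y x = w x y / wdeg G w y := by
    rw [wMeasure, if_pos hxy.symm, hw.1 y x]
  have hW := wW1_le hw hxy
  rw [hmx, hmy] at hW
  rw [wRicci, dist_eq_one_iff_adj.2 hxy, posPart', Nat.cast_one, div_one]
  linarith
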